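/- arXiv:1911.02865 — 2 statements merged into one kernel-verified Lean document; each statement's English description precedes it below -/
import Mathlib

section
/- Let d ≥ 1 be an integer, let 𝒱 be a binary coalescence tree over a finite set A with |A| ≥ 2, and let α : A → ℝ satisfy 0 < α(a) ≤ (d+2)/2 for every a ∈ A. Then the function c is a consistent cumulant homogeneity, namely: (1) for every subset B ⊆ A one has Σ_{v ∈ 𝒱̊ : v ∩ B ≠ ∅} c(v) ≥ Σ_{a ∈ B} α(a); (2) for every u ∈ 𝒱̊ one has Σ_{v ∈ 𝒱̊ : v ⊆ u} c(v) ≤ Σ_{a ∈ u} α(a); (3) if |A| ≥ 3, then for every u ∈ 𝒱̊ with |u| ≤ 3 one has Σ_{v ∈ 𝒱̊ : v ⊆ u} c(v) < (d+2)(|u| − 1). -/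
/-!
For a fixed leaf `a`, the interior nodes containing `a` form a chain under inclusion, and
`𝔡(v, a)` is the rank of `v` in that chain, except at the root, where it is one less. Hence
`∑_{a ∈ v ⊆ u} 2^{-𝔡(v,a)}` is the geometric sum `1 - 2^{-𝔡(u,a)}` for `u ≠ A` and exactly `1`
for `u = A`. Exchanging the order of summation turns the three claims into statements about
these sums weighted by `α`: they equal `1` on the root (claim 1), never exceed `1` (claim 2),
and stay below `1` on the two-element nodes, while a three-element node has total weight at
most `3 (d + 2) / 2 < 2 (d + 2)` (claim 3).
-/

open Finset

/-- `𝔡(u,a)`: the number of interior nodes `v` of the coalescence tree `𝒱` with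
`a ∈ v ⊆ u` (with the special convention, subtracting 1, at the root `A`). -/
def treeDepth {ι : Type*} [DecidableEq ι] (𝒱 : Finset (Finset ι)) (A u : Finset ι)
    (a : ι) : ℕ :=
  if u = A then (𝒱.filter fun v => 2 ≤ v.card ∧ a ∈ v).card - 1
  else (𝒱.filter fun v => 2 ≤ v.card ∧ a ∈ v ∧ v ⊆ u).card

/-- The cumulant homogeneity `c(u) = ∑_{a ∈ u} α(a) 2^{-𝔡(u,a)}`. -/
noncomputable def cumHom {ι : Type*} [DecidableEq ι] (𝒱 : Finset (Finset ι))
    (A : Finset ι) (α : ι → ℝ) (u : Finset ι) : ℝ :=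
  ∑ a ∈ u, α a * ((2 : ℝ) ^ treeDepth 𝒱 A u a)⁻¹

lemma sum_Icc_inv_two_pow (m : ℕ) :
    ∑ k ∈ Icc 1 m, ((2 : ℝ) ^ k)⁻¹ = 1 - ((2 : ℝ) ^ m)⁻¹ := by
  induction m with
  | zero => simp
  | succ n ih =>
    rw [sum_Icc_succ_top (by omega), ih, pow_succ]
    field_simp
    ring

/-- On a finite chain, `x ↦ #{y ∈ C | y ≤ x}` is a bijection onto `[1, #C]`. -/
theorem IsChain.sum_comp_card_filter_le {α M : Type*} [PartialOrder α] [DecidableLE α]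
    [AddCommMonoid M] {C : Finset α} (hC : IsChain (· ≤ ·) (C : Set α)) (f : ℕ → M) :
    ∑ x ∈ C, f #{y ∈ C | y ≤ x} = ∑ k ∈ Icc 1 #C, f k := by
  set rank : α → ℕ := fun x => #{y ∈ C | y ≤ x}
  have rank_lt : ∀ {x y}, y ∈ C → x < y → rank x < rank y := fun hy hxy =>
    card_lt_card
      ⟨fun z hz => mem_filter.2 ⟨(mem_filter.1 hz).1, (mem_filter.1 hz).2.trans hxy.le⟩,
      fun h => hxy.not_ge (mem_filter.1 (h (mem_filter.2 ⟨hy, le_rfl⟩))).2⟩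
  have rank_injOn : Set.InjOn rank C := by
    intro x hx y hy hrank
    by_contra hne
    rcases hC.total hx hy with hxy | hyx
    · exact (rank_lt hy (hxy.lt_of_ne hne)).ne hrank
    · exact (rank_lt hx (hyx.lt_of_ne (Ne.symm hne))).ne' hrank
  have image_rank : C.image rank = Icc 1 #C := by
    refine eq_of_subset_of_card_le (fun k hk => ?_) ?_
    · obtain ⟨x, hx, rfl⟩ := mem_image.1 hk
      exact mem_Icc.2 ⟨card_pos.2 ⟨x, mem_filter.2 ⟨hx, le_rfl⟩⟩, card_filter_le _ _⟩
    · rw [Nat.card_Icc, card_image_of_injOn rank_injOn, Nat.add_sub_cancel]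
  rw [← image_rank, sum_image rank_injOn]

def IsLaminar {ι : Type*} (𝒱 : Finset (Finset ι)) : Prop :=
  ∀ u ∈ 𝒱, ∀ v ∈ 𝒱, Disjoint u v ∨ u ⊆ v ∨ v ⊆ u

def interiorAncestors {ι : Type*} [DecidableEq ι] (𝒱 : Finset (Finset ι)) (a : ι)
    (u : Finset ι) : Finset (Finset ι) :=
  {v ∈ 𝒱 | 2 ≤ #v ∧ a ∈ v ∧ v ⊆ u}

section CoalescenceTree

variable {ι : Type*} [DecidableEq ι] {𝒱 : Finset (Finset ι)} {A u v : Finset ι} {a : ι}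

lemma mem_interiorAncestors :
    v ∈ interiorAncestors 𝒱 a u ↔ v ∈ 𝒱 ∧ 2 ≤ #v ∧ a ∈ v ∧ v ⊆ u :=
  mem_filter

lemma treeDepth_of_ne (h : u ≠ A) : treeDepth 𝒱 A u a = #(interiorAncestors 𝒱 a u) := by
  rw [treeDepth, if_neg h, interiorAncestors]

lemma treeDepth_root (h𝒱A : ∀ v ∈ 𝒱, v ⊆ A) :
    treeDepth 𝒱 A A a = #(interiorAncestors 𝒱 a A) - 1 := by
  rw [treeDepth, if_pos rfl, interiorAncestors]
  congr 2
  exact filter_congr fun v hv => by simp [h𝒱A v hv]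

lemma filter_le_interiorAncestors (hvu : v ⊆ u) :
    {w ∈ interiorAncestors 𝒱 a u | w ≤ v} = interiorAncestors 𝒱 a v := by
  ext w
  simp only [mem_filter, mem_interiorAncestors]
  exact ⟨fun ⟨⟨h𝒱, h2, ha, _⟩, hwv⟩ => ⟨h𝒱, h2, ha, hwv⟩,
    fun ⟨h𝒱, h2, ha, hwv⟩ => ⟨⟨h𝒱, h2, ha, hwv.trans hvu⟩, hwv⟩⟩

lemma isChain_interiorAncestors (hlam : IsLaminar 𝒱) :
    IsChain (· ≤ ·) (interiorAncestors 𝒱 a u : Set (Finset ι)) := by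
  intro v hv w hw _
  rw [mem_coe, mem_interiorAncestors] at hv hw
  exact (hlam v hv.1 w hw.1).resolve_left (not_disjoint_iff.2 ⟨a, hv.2.2.1, hw.2.2.1⟩)

lemma sum_inv_two_pow_treeDepth_of_ssubset (hlam : IsLaminar 𝒱) (hu : u ⊂ A) :
    ∑ v ∈ interiorAncestors 𝒱 a u, ((2 : ℝ) ^ treeDepth 𝒱 A v a)⁻¹ =
      1 - ((2 : ℝ) ^ treeDepth 𝒱 A u a)⁻¹ := by
  calc ∑ v ∈ interiorAncestors 𝒱 a u, ((2 : ℝ) ^ treeDepth 𝒱 A v a)⁻¹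
      = ∑ v ∈ interiorAncestors 𝒱 a u,
          ((2 : ℝ) ^ #{w ∈ interiorAncestors 𝒱 a u | w ≤ v})⁻¹ := by
        refine sum_congr rfl fun v hv => ?_
        have hvu := (mem_interiorAncestors.1 hv).2.2.2
        rw [treeDepth_of_ne (hvu.trans_ssubset hu).ne, filter_le_interiorAncestors hvu]
    _ = ∑ k ∈ Icc 1 #(interiorAncestors 𝒱 a u), ((2 : ℝ) ^ k)⁻¹ :=
        (isChain_interiorAncestors hlam).sum_comp_card_filter_le fun k => ((2 : ℝ) ^ k)⁻¹
    _ = 1 - ((2 : ℝ) ^ treeDepth 𝒱 A u a)⁻¹ := by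
        rw [sum_Icc_inv_two_pow, treeDepth_of_ne hu.ne]

/-- At the root the depth is one less than the rank along the chain, which doubles the last
weight and completes the geometric sum to `1`. -/
lemma sum_inv_two_pow_treeDepth_root (hlam : IsLaminar 𝒱) (h𝒱A : ∀ v ∈ 𝒱, v ⊆ A)
    (hA : A ∈ 𝒱) (hA2 : 2 ≤ #A) (ha : a ∈ A) :
    ∑ v ∈ interiorAncestors 𝒱 a A, ((2 : ℝ) ^ treeDepth 𝒱 A v a)⁻¹ = 1 := by
  set m := #(interiorAncestors 𝒱 a A)
  have hAA : A ∈ interiorAncestors 𝒱 a A := mem_interiorAncestors.2 ⟨hA, hA2, ha, subset_rfl⟩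
  have hterm : ∀ v ∈ interiorAncestors 𝒱 a A, ((2 : ℝ) ^ treeDepth 𝒱 A v a)⁻¹ =
      ((2 : ℝ) ^ #{w ∈ interiorAncestors 𝒱 a A | w ≤ v})⁻¹ +
        if v = A then ((2 : ℝ) ^ m)⁻¹ else 0 := by
    intro v hv
    rw [filter_le_interiorAncestors (mem_interiorAncestors.1 hv).2.2.2]
    split_ifs with hvA
    · subst hvA
      have hpow : (2 : ℝ) ^ m = 2 ^ (m - 1) * 2 := by
        rw [← pow_succ, Nat.sub_add_cancel (card_pos.2 ⟨_, hAA⟩)]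
      rw [treeDepth_root h𝒱A, hpow]
      ring
    · rw [treeDepth_of_ne hvA, add_zero]
  rw [sum_congr rfl hterm, sum_add_distrib,
    (isChain_interiorAncestors hlam).sum_comp_card_filter_le fun k => ((2 : ℝ) ^ k)⁻¹,
    sum_Icc_inv_two_pow, sum_ite_eq' _ _, if_pos hAA]
  ring

lemma sum_inv_two_pow_treeDepth_le_one (hlam : IsLaminar 𝒱)
    (h𝒱A : ∀ v ∈ 𝒱, v ⊆ A) (hu : u ∈ 𝒱) (hu2 : 2 ≤ #u) (ha : a ∈ u) :
    ∑ v ∈ interiorAncestors 𝒱 a u, ((2 : ℝ) ^ treeDepth 𝒱 A v a)⁻¹ ≤ 1 := by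
  obtain rfl | huA := eq_or_ne u A
  · exact (sum_inv_two_pow_treeDepth_root hlam h𝒱A hu hu2 ha).le
  · rw [sum_inv_two_pow_treeDepth_of_ssubset hlam (ssubset_of_subset_of_ne (h𝒱A u hu) huA)]
    exact sub_le_self _ (by positivity)

variable (α : ι → ℝ)

lemma sum_cumHom_filter_subset :
    ∑ v ∈ 𝒱.filter (fun v => 2 ≤ v.card ∧ v ⊆ u), cumHom 𝒱 A α v =
      ∑ a ∈ u, α a * ∑ v ∈ interiorAncestors 𝒱 a u, ((2 : ℝ) ^ treeDepth 𝒱 A v a)⁻¹ := by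
  simp_rw [cumHom, mul_sum]
  refine sum_comm' fun v a => ?_
  simp only [mem_filter, mem_interiorAncestors]
  exact ⟨fun ⟨⟨h𝒱, h2, hvu⟩, ha⟩ => ⟨⟨h𝒱, h2, ha, hvu⟩, hvu ha⟩,
    fun ⟨⟨h𝒱, h2, ha, hvu⟩, _⟩ => ⟨⟨h𝒱, h2, hvu⟩, ha⟩⟩

lemma sum_cumHom_filter_subset_le (hlam : IsLaminar 𝒱)
    (h𝒱A : ∀ v ∈ 𝒱, v ⊆ A) (hu : u ∈ 𝒱) (hu2 : 2 ≤ #u) (hα : ∀ a ∈ u, 0 ≤ α a) :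
    ∑ v ∈ 𝒱.filter (fun v => 2 ≤ v.card ∧ v ⊆ u), cumHom 𝒱 A α v ≤ ∑ a ∈ u, α a := by
  rw [sum_cumHom_filter_subset]
  exact sum_le_sum fun a ha => mul_le_of_le_one_right (hα a ha)
    (sum_inv_two_pow_treeDepth_le_one hlam h𝒱A hu hu2 ha)

lemma sum_cumHom_filter_subset_lt (hlam : IsLaminar 𝒱)
    (hu : u ⊂ A) (hne : u.Nonempty) (hα : ∀ a ∈ u, 0 < α a) :
    ∑ v ∈ 𝒱.filter (fun v => 2 ≤ v.card ∧ v ⊆ u), cumHom 𝒱 A α v < ∑ a ∈ u, α a := by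
  rw [sum_cumHom_filter_subset]
  refine sum_lt_sum_of_nonempty hne fun a ha => mul_lt_of_lt_one_right (hα a ha) ?_
  rw [sum_inv_two_pow_treeDepth_of_ssubset hlam hu]
  exact sub_lt_self _ (by positivity)

lemma sum_le_sum_cumHom_filter_inter_nonempty (hlam : IsLaminar 𝒱) (h𝒱A : ∀ v ∈ 𝒱, v ⊆ A)
    (hA : A ∈ 𝒱) (hA2 : 2 ≤ #A) (hα : ∀ a ∈ A, 0 ≤ α a) {B : Finset ι} (hB : B ⊆ A) :
    ∑ a ∈ B, α a ≤
      ∑ v ∈ 𝒱.filter (fun v => 2 ≤ v.card ∧ (v ∩ B).Nonempty), cumHom 𝒱 A α v := by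
  calc ∑ a ∈ B, α a
      = ∑ a ∈ B, α a * ∑ v ∈ interiorAncestors 𝒱 a A, ((2 : ℝ) ^ treeDepth 𝒱 A v a)⁻¹ :=
        sum_congr rfl fun a ha => by
          rw [sum_inv_two_pow_treeDepth_root hlam h𝒱A hA hA2 (hB ha), mul_one]
    _ = ∑ v ∈ 𝒱.filter (fun v => 2 ≤ v.card ∧ (v ∩ B).Nonempty),
          ∑ a ∈ v ∩ B, α a * ((2 : ℝ) ^ treeDepth 𝒱 A v a)⁻¹ := by
        simp_rw [mul_sum]
        refine sum_comm' fun a v => ?_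
        simp only [mem_filter, mem_interiorAncestors, mem_inter]
        constructor
        · rintro ⟨haB, h𝒱, h2, hav, -⟩
          exact ⟨⟨hav, haB⟩, h𝒱, h2, a, mem_inter.2 ⟨hav, haB⟩⟩
        · rintro ⟨⟨hav, haB⟩, h𝒱, h2, -⟩
          exact ⟨haB, h𝒱, h2, hav, h𝒱A v h𝒱⟩
    _ ≤ ∑ v ∈ 𝒱.filter (fun v => 2 ≤ v.card ∧ (v ∩ B).Nonempty), cumHom 𝒱 A α v := by
        refine sum_le_sum fun v hv => sum_le_sum_of_subset_of_nonneg inter_subset_left ?_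
        intro a hav _
        have := hα a (h𝒱A v (mem_filter.1 hv).1 hav)
        positivity

end CoalescenceTree

theorem stmt0_general {ι : Type*} [DecidableEq ι] (d : ℕ)
    (A : Finset ι) (hA : 2 ≤ A.card)
    (𝒱 : Finset (Finset ι))
    (hmem : ∀ u ∈ 𝒱, u.Nonempty ∧ u ⊆ A)
    (hlam : ∀ u ∈ 𝒱, ∀ v ∈ 𝒱, Disjoint u v ∨ u ⊆ v ∨ v ⊆ u)
    (hroot : A ∈ 𝒱)
    (α : ι → ℝ) (hα : ∀ a ∈ A, 0 < α a ∧ α a ≤ ((d : ℝ) + 2) / 2) :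
    (∀ B ⊆ A, ∑ a ∈ B, α a ≤
        ∑ v ∈ 𝒱.filter (fun v => 2 ≤ v.card ∧ (v ∩ B).Nonempty), cumHom 𝒱 A α v) ∧
    (∀ u ∈ 𝒱, 2 ≤ u.card →
        ∑ v ∈ 𝒱.filter (fun v => 2 ≤ v.card ∧ v ⊆ u), cumHom 𝒱 A α v ≤ ∑ a ∈ u, α a) ∧
    (3 ≤ A.card → ∀ u ∈ 𝒱, 2 ≤ u.card → u.card ≤ 3 →
        ∑ v ∈ 𝒱.filter (fun v => 2 ≤ v.card ∧ v ⊆ u), cumHom 𝒱 A α v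
          < ((d : ℝ) + 2) * ((u.card : ℝ) - 1)) := by
  have h𝒱A : ∀ u ∈ 𝒱, u ⊆ A := fun u hu => (hmem u hu).2
  have hαpos : ∀ a ∈ A, 0 < α a := fun a ha => (hα a ha).1
  refine ⟨fun B hB => sum_le_sum_cumHom_filter_inter_nonempty α hlam h𝒱A hroot hA
      (fun a ha => (hαpos a ha).le) hB,
    fun u hu hu2 => sum_cumHom_filter_subset_le α hlam h𝒱A hu hu2
      (fun a ha => (hαpos a (h𝒱A u hu ha)).le), ?_⟩
  intro hA3 u hu hu_two hu_three
  have hsum_α : ∑ a ∈ u, α a ≤ #u * (((d : ℝ) + 2) / 2) := by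
    simpa using sum_le_card_nsmul u α _ fun a ha => (hα a (h𝒱A u hu ha)).2
  have hd : (0 : ℝ) ≤ d := d.cast_nonneg
  obtain hcard | hcard : #u = 2 ∨ #u = 3 := by omega
  · have huA : u ⊂ A := ssubset_of_subset_of_ne (h𝒱A u hu) (by rintro rfl; omega)
    have := sum_cumHom_filter_subset_lt α hlam huA (card_pos.1 (by omega))
      (fun a ha => hαpos a (h𝒱A u hu ha))
    rw [hcard] at hsum_α ⊢
    push_cast at hsum_α ⊢
    linarith
  · have := sum_cumHom_filter_subset_le α hlam h𝒱A hu hu_two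
      (fun a ha => (hαpos a (h𝒱A u hu ha)).le)
    rw [hcard] at hsum_α ⊢
    push_cast at hsum_α ⊢
    linarith

theorem stmt0 {ι : Type*} [DecidableEq ι] (d : ℕ) (hd : 1 ≤ d)
    (A : Finset ι) (hA : 2 ≤ A.card)
    (𝒱 : Finset (Finset ι))
    (hmem : ∀ u ∈ 𝒱, u.Nonempty ∧ u ⊆ A)
    (hlam : ∀ u ∈ 𝒱, ∀ v ∈ 𝒱, Disjoint u v ∨ u ⊆ v ∨ v ⊆ u)
    (hroot : A ∈ 𝒱) (hsing : ∀ a ∈ A, {a} ∈ 𝒱)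
    (hbin : ∀ u ∈ 𝒱, 2 ≤ u.card →
      ∃ v ∈ 𝒱, ∃ w ∈ 𝒱, Disjoint v w ∧ v ∪ w = u ∧ v ≠ u ∧ w ≠ u)
    (α : ι → ℝ) (hα : ∀ a ∈ A, 0 < α a ∧ α a ≤ ((d : ℝ) + 2) / 2) :
    (∀ B ⊆ A, ∑ a ∈ B, α a ≤
        ∑ v ∈ 𝒱.filter (fun v => 2 ≤ v.card ∧ (v ∩ B).Nonempty), cumHom 𝒱 A α v) ∧
    (∀ u ∈ 𝒱, 2 ≤ u.card →
        ∑ v ∈ 𝒱.filter (fun v => 2 ≤ v.card ∧ v ⊆ u), cumHom 𝒱 A α v ≤ ∑ a ∈ u, α a) ∧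
    (3 ≤ A.card → ∀ u ∈ 𝒱, 2 ≤ u.card → u.card ≤ 3 →
        ∑ v ∈ 𝒱.filter (fun v => 2 ≤ v.card ∧ v ⊆ u), cumHom 𝒱 A α v
          < ((d : ℝ) + 2) * ((u.card : ℝ) - 1)) :=
  stmt0_general d A hA 𝒱 hmem hlam hroot α hα
end

section
/- Let 𝒱 be a binary coalescence tree over a finite set A with |A| ≥ 2 and let α : A → ℝ. Set m = min_{a∈A} α(a) and M = max_{a∈A} α(a). Then for every u ∈ 𝒱̊ with u ≠ A one has m ≤ c(u) ≤ M, while for the root one has 2m ≤ c(A) ≤ 2M. -/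
open Finset

section CoalescenceTree

variable {ι : Type*} [DecidableEq ι]

/-- `𝔡(u, a)` without the special convention at the root. -/
def subtreeDepth (𝒱 : Finset (Finset ι)) (u : Finset ι) (a : ι) : ℕ :=
  #{v ∈ 𝒱 | 2 ≤ #v ∧ a ∈ v ∧ v ⊆ u}

noncomputable def subtreeCumHom (𝒱 : Finset (Finset ι)) (α : ι → ℝ) (u : Finset ι) : ℝ :=
  ∑ a ∈ u, α a * ((2 : ℝ) ^ subtreeDepth 𝒱 u a)⁻¹

lemma cumHom_eq_subtreeCumHom {𝒱 : Finset (Finset ι)} {A u : Finset ι} (huA : u ≠ A)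
    (α : ι → ℝ) : cumHom 𝒱 A α u = subtreeCumHom 𝒱 α u := by
  simp only [cumHom, subtreeCumHom, treeDepth, subtreeDepth, if_neg huA]

lemma subtreeDepth_singleton (𝒱 : Finset (Finset ι)) (a : ι) : subtreeDepth 𝒱 {a} a = 0 := by
  refine card_eq_zero.mpr <| filter_eq_empty_iff.mpr ?_
  rintro v - ⟨hv, -, hva⟩
  have := card_le_card hva
  rw [card_singleton] at this
  omega

lemma subtreeCumHom_singleton (𝒱 : Finset (Finset ι)) (α : ι → ℝ) (a : ι) :
    subtreeCumHom 𝒱 α {a} = α a := by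
  simp [subtreeCumHom, subtreeDepth_singleton]

/-- The interior nodes between a leaf `a ∈ v` and the parent `u = v ∪ w` are those below `v`,
and `u` itself. -/
lemma subtreeDepth_parent {𝒱 : Finset (Finset ι)}
    (hlam : ∀ u ∈ 𝒱, ∀ v ∈ 𝒱, Disjoint u v ∨ u ⊆ v ∨ v ⊆ u)
    {u v w : Finset ι} (hu : u ∈ 𝒱) (hu2 : 2 ≤ #u) (hv : v ∈ 𝒱) (hw : w ∈ 𝒱)
    (hvw : Disjoint v w) (hvwu : v ∪ w = u) (hvu : v ≠ u) {a : ι} (ha : a ∈ v) :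
    subtreeDepth 𝒱 u a = subtreeDepth 𝒱 v a + 1 := by
  have hvsub : v ⊆ u := hvwu ▸ subset_union_left
  have hnodes : {x ∈ 𝒱 | 2 ≤ #x ∧ a ∈ x ∧ x ⊆ u} = insert u {x ∈ 𝒱 | 2 ≤ #x ∧ a ∈ x ∧ x ⊆ v} := by
    ext x
    simp only [mem_filter, mem_insert]
    constructor
    · rintro ⟨hx, hx2, hax, hxu⟩
      rcases hlam x hx v hv with hxv | hxv | hvx
      · exact absurd ha (disjoint_left.mp hxv hax)
      · exact Or.inr ⟨hx, hx2, hax, hxv⟩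
      rcases hlam x hx w hw with hxw | hxw | hwx
      · refine Or.inr ⟨hx, hx2, hax, ?_⟩
        have : x ⊆ u \ w := subset_sdiff.mpr ⟨hxu, hxw⟩
        rwa [← hvwu, union_sdiff_right, sdiff_eq_self_of_disjoint hvw] at this
      · exact absurd (hxw hax) (disjoint_left.mp hvw ha)
      · exact Or.inl (hxu.antisymm (hvwu ▸ union_subset hvx hwx))
    · rintro (rfl | ⟨hx, hx2, hax, hxv⟩)
      · exact ⟨hu, hu2, hvsub ha, subset_rfl⟩
      · exact ⟨hx, hx2, hax, hxv.trans hvsub⟩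
  have hu_notMem : u ∉ {x ∈ 𝒱 | 2 ≤ #x ∧ a ∈ x ∧ x ⊆ v} := fun h =>
    hvu (hvsub.antisymm (mem_filter.mp h).2.2.2)
  rw [subtreeDepth, hnodes, card_insert_of_notMem hu_notMem]
  rfl

lemma subtreeCumHom_parent {𝒱 : Finset (Finset ι)}
    (hlam : ∀ u ∈ 𝒱, ∀ v ∈ 𝒱, Disjoint u v ∨ u ⊆ v ∨ v ⊆ u)
    {u v w : Finset ι} (hu : u ∈ 𝒱) (hu2 : 2 ≤ #u) (hv : v ∈ 𝒱) (hw : w ∈ 𝒱)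
    (hvw : Disjoint v w) (hvwu : v ∪ w = u) (hvu : v ≠ u) (hwu : w ≠ u) (α : ι → ℝ) :
    subtreeCumHom 𝒱 α u = (subtreeCumHom 𝒱 α v + subtreeCumHom 𝒱 α w) / 2 := by
  have hwvu : w ∪ v = u := union_comm w v ▸ hvwu
  rw [subtreeCumHom, ← hvwu, sum_union hvw, add_div, subtreeCumHom, subtreeCumHom, sum_div,
    sum_div, hvwu]
  congr 1 <;> refine sum_congr rfl fun a ha => ?_
  · rw [subtreeDepth_parent hlam hu hu2 hv hw hvw hvwu hvu ha, pow_succ, mul_inv, mul_div_assoc,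
      div_eq_mul_inv]
  · rw [subtreeDepth_parent hlam hu hu2 hw hv hvw.symm hwvu hwu ha, pow_succ, mul_inv,
      mul_div_assoc, div_eq_mul_inv]

lemma subtreeCumHom_mem_Icc {𝒱 : Finset (Finset ι)} (hne : ∀ u ∈ 𝒱, u.Nonempty)
    (hlam : ∀ u ∈ 𝒱, ∀ v ∈ 𝒱, Disjoint u v ∨ u ⊆ v ∨ v ⊆ u)
    (hbin : ∀ u ∈ 𝒱, 2 ≤ #u → ∃ v ∈ 𝒱, ∃ w ∈ 𝒱, Disjoint v w ∧ v ∪ w = u ∧ v ≠ u ∧ w ≠ u)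
    {α : ι → ℝ} {m M : ℝ} (u : Finset ι) (hu : u ∈ 𝒱) (hα : ∀ a ∈ u, α a ∈ Set.Icc m M) :
    subtreeCumHom 𝒱 α u ∈ Set.Icc m M := by
  induction u using Finset.strongInduction with
  | H u ih =>
    rcases Nat.lt_or_ge #u 2 with hu1 | hu2
    · obtain ⟨a, rfl⟩ := card_eq_one.mp (by have := (hne u hu).card_pos; omega : #u = 1)
      rw [subtreeCumHom_singleton]
      exact hα a (mem_singleton_self a)
    obtain ⟨v, hv, w, hw, hvw, hvwu, hvu, hwu⟩ := hbin u hu hu2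
    have hvsub : v ⊂ u := (hvwu ▸ subset_union_left).ssubset_of_ne hvu
    have hwsub : w ⊂ u := (hvwu ▸ subset_union_right).ssubset_of_ne hwu
    obtain ⟨hmv, hvM⟩ := ih v hvsub hv fun a ha => hα a (hvsub.subset ha)
    obtain ⟨hmw, hwM⟩ := ih w hwsub hw fun a ha => hα a (hwsub.subset ha)
    rw [subtreeCumHom_parent hlam hu hu2 hv hw hvw hvwu hvu hwu]
    constructor <;> linarith

lemma treeDepth_root_add_one {𝒱 : Finset (Finset ι)} {A : Finset ι} (hA : 2 ≤ #A)
    (hsub : ∀ u ∈ 𝒱, u ⊆ A) (hroot : A ∈ 𝒱) {a : ι} (ha : a ∈ A) :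
    treeDepth 𝒱 A A a + 1 = subtreeDepth 𝒱 A a := by
  have hnodes : {v ∈ 𝒱 | 2 ≤ #v ∧ a ∈ v} = {v ∈ 𝒱 | 2 ≤ #v ∧ a ∈ v ∧ v ⊆ A} :=
    filter_congr fun v hv => by simp [hsub v hv]
  have hpos : 0 < subtreeDepth 𝒱 A a := card_pos.mpr ⟨A, mem_filter.mpr ⟨hroot, hA, ha, subset_rfl⟩⟩
  rw [treeDepth, if_pos rfl, hnodes]
  exact Nat.sub_add_cancel hpos

lemma cumHom_root {𝒱 : Finset (Finset ι)} {A : Finset ι} (hA : 2 ≤ #A)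
    (hsub : ∀ u ∈ 𝒱, u ⊆ A) (hroot : A ∈ 𝒱) (α : ι → ℝ) :
    cumHom 𝒱 A α A = 2 * subtreeCumHom 𝒱 α A := by
  rw [cumHom, subtreeCumHom, mul_sum]
  refine sum_congr rfl fun a ha => ?_
  rw [← treeDepth_root_add_one hA hsub hroot ha, pow_succ, mul_inv]
  ring

end CoalescenceTree

theorem stmt1_general {ι : Type*} [DecidableEq ι]
    (A : Finset ι) (hA : 2 ≤ A.card) (hAne : A.Nonempty)
    (𝒱 : Finset (Finset ι))
    (hmem : ∀ u ∈ 𝒱, u.Nonempty ∧ u ⊆ A)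
    (hlam : ∀ u ∈ 𝒱, ∀ v ∈ 𝒱, Disjoint u v ∨ u ⊆ v ∨ v ⊆ u)
    (hroot : A ∈ 𝒱)
    (hbin : ∀ u ∈ 𝒱, 2 ≤ u.card →
      ∃ v ∈ 𝒱, ∃ w ∈ 𝒱, Disjoint v w ∧ v ∪ w = u ∧ v ≠ u ∧ w ≠ u)
    (α : ι → ℝ) :
    (∀ u ∈ 𝒱, 2 ≤ u.card → u ≠ A →
        A.inf' hAne α ≤ cumHom 𝒱 A α u ∧ cumHom 𝒱 A α u ≤ A.sup' hAne α) ∧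
    2 * A.inf' hAne α ≤ cumHom 𝒱 A α A ∧ cumHom 𝒱 A α A ≤ 2 * A.sup' hAne α := by
  have hbound : ∀ u ∈ 𝒱, subtreeCumHom 𝒱 α u ∈ Set.Icc (A.inf' hAne α) (A.sup' hAne α) :=
    fun u hu => subtreeCumHom_mem_Icc (fun v hv => (hmem v hv).1) hlam hbin u hu
      fun a ha => ⟨inf'_le α ((hmem u hu).2 ha), le_sup' α ((hmem u hu).2 ha)⟩
  refine ⟨fun u hu _ huA => ?_, ?_⟩
  · rw [cumHom_eq_subtreeCumHom huA]
    exact hbound u hu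
  · obtain ⟨hm, hM⟩ := hbound A hroot
    rw [cumHom_root hA (fun u hu => (hmem u hu).2) hroot]
    constructor <;> linarith

theorem stmt1 {ι : Type*} [DecidableEq ι]
    (A : Finset ι) (hA : 2 ≤ A.card) (hAne : A.Nonempty)
    (𝒱 : Finset (Finset ι))
    (hmem : ∀ u ∈ 𝒱, u.Nonempty ∧ u ⊆ A)
    (hlam : ∀ u ∈ 𝒱, ∀ v ∈ 𝒱, Disjoint u v ∨ u ⊆ v ∨ v ⊆ u)
    (hroot : A ∈ 𝒱) (hsing : ∀ a ∈ A, {a} ∈ 𝒱)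
    (hbin : ∀ u ∈ 𝒱, 2 ≤ u.card →
      ∃ v ∈ 𝒱, ∃ w ∈ 𝒱, Disjoint v w ∧ v ∪ w = u ∧ v ≠ u ∧ w ≠ u)
    (α : ι → ℝ) :
    (∀ u ∈ 𝒱, 2 ≤ u.card → u ≠ A →
        A.inf' hAne α ≤ cumHom 𝒱 A α u ∧ cumHom 𝒱 A α u ≤ A.sup' hAne α) ∧
    2 * A.inf' hAne α ≤ cumHom 𝒱 A α A ∧ cumHom 𝒱 A α A ≤ 2 * A.sup' hAne α :=
  stmt1_general A hA hAne 𝒱 hmem hlam hroot hbin α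
end
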